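/- Let $1 < p' < 2$, let $1/p + 1/p' = 1$, and let $(v_n)$ be a sequence in $L^{p'}(\mathbb{R}^N)$ such that $v_n \rightharpoonup v$ weakly in $L^{p'}$ and $\mathbf{1}_{B_r} v_n \to \mathbf{1}_{B_r} v$ strongly in $L^{p'}$ for all $r > 0$. Then for $v_n^{(2)} := v_n - v$ one has $\big\| |v_n^{(2)}|^{p'-2} v_n^{(2)} - |v_n|^{p'-2} v_n + |v|^{p'-2} v \big\|_{L^p(\mathbb{R}^N)} \to 0$ as $n \to \infty$. -/

import Mathlib

open MeasureTheory Filter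
open scoped ENNReal NNReal

/-- Subadditivity of `t ↦ t^α` on nonneg reals for `α ≤ 1`. -/
lemma rpow_add_le_aux {α : ℝ} (h0 : 0 ≤ α) (h1 : α ≤ 1) {x y : ℝ} (hx : 0 ≤ x) (hy : 0 ≤ y) :
    (x + y) ^ α ≤ x ^ α + y ^ α := by
  have h := NNReal.rpow_add_le_add_rpow x.toNNReal y.toNNReal h0 h1
  have h' := (NNReal.coe_le_coe).2 h
  rw [NNReal.coe_rpow, NNReal.coe_add, NNReal.coe_add, NNReal.coe_rpow, NNReal.coe_rpow,
    Real.coe_toNNReal x hx, Real.coe_toNNReal y hy] at h'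
  exact h'

lemma fval_nonneg {α : ℝ} (h0 : 0 < α) {t : ℝ} (ht : 0 ≤ t) :
    |t| ^ (α - 1) * t = t ^ α := by
  rcases eq_or_lt_of_le ht with h | h
  · simp [← h, Real.zero_rpow h0.ne']
  · rw [abs_of_nonneg ht]
    have : t ^ α = t ^ (α - 1 + 1) := by ring_nf
    rw [this, Real.rpow_add h, Real.rpow_one]

lemma fval_nonpos {α : ℝ} (h0 : 0 < α) {t : ℝ} (ht : t ≤ 0) :
    |t| ^ (α - 1) * t = -((-t) ^ α) := by
  have h := fval_nonneg h0 (neg_nonneg.2 ht)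
  rw [abs_neg] at h
  nlinarith [h]

lemma abs_rpow_sub_abs_rpow {α : ℝ} (h0 : 0 < α) (h1 : α ≤ 1) {x y : ℝ} (hx : 0 ≤ x)
    (hy : 0 ≤ y) : |x ^ α - y ^ α| ≤ |x - y| ^ α := by
  have main : ∀ a b : ℝ, 0 ≤ a → 0 ≤ b → b ≤ a → a ^ α - b ^ α ≤ (a - b) ^ α := by
    intro a b ha hb hba
    have h := rpow_add_le_aux h0.le h1 (sub_nonneg.2 hba) hb
    rw [sub_add_cancel] at h
    linarith
  rcases le_total y x with h | h
  · rw [abs_of_nonneg (sub_nonneg.2 (Real.rpow_le_rpow hy h h0.le)),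
      abs_of_nonneg (sub_nonneg.2 h)]
    exact main x y hx hy h
  · rw [abs_sub_comm, abs_sub_comm x y, abs_of_nonneg (sub_nonneg.2 (Real.rpow_le_rpow hx h h0.le)),
      abs_of_nonneg (sub_nonneg.2 h)]
    exact main y x hy hx h

/-- key pointwise inequality -/
lemma key_ptwise {α : ℝ} (h0 : 0 < α) (h1 : α ≤ 1) (a b : ℝ) :
    abs (|a| ^ (α - 1) * a - |b| ^ (α - 1) * b) ≤ 2 * |a - b| ^ α := by
  have habs : ∀ t : ℝ, (0:ℝ) ≤ |t| := fun t => abs_nonneg t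
  rcases le_total 0 a with ha | ha <;> rcases le_total 0 b with hb | hb
  · rw [fval_nonneg h0 ha, fval_nonneg h0 hb]
    have := abs_rpow_sub_abs_rpow h0 h1 ha hb
    nlinarith [Real.rpow_nonneg (abs_nonneg (a - b)) α]
  · rw [fval_nonneg h0 ha, fval_nonpos h0 hb]
    have hab : |a - b| = a + -b := by rw [abs_of_nonneg]; ring_nf; linarith
    have h1' : a ^ α ≤ (a + -b) ^ α := Real.rpow_le_rpow ha (by linarith) h0.le
    have h2' : (-b) ^ α ≤ (a + -b) ^ α := Real.rpow_le_rpow (by linarith) (by linarith) h0.le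
    have hnn : 0 ≤ a ^ α + (-b) ^ α :=
      add_nonneg (Real.rpow_nonneg ha α) (Real.rpow_nonneg (by linarith) α)
    rw [hab, sub_neg_eq_add, abs_of_nonneg hnn]
    linarith
  · rw [fval_nonpos h0 ha, fval_nonneg h0 hb]
    have hab : |a - b| = -a + b := by rw [abs_sub_comm, abs_of_nonneg]; ring_nf; linarith
    have h1' : b ^ α ≤ (-a + b) ^ α := Real.rpow_le_rpow hb (by linarith) h0.le
    have h2' : (-a) ^ α ≤ (-a + b) ^ α := Real.rpow_le_rpow (by linarith) (by linarith) h0.le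
    have hnn : 0 ≤ (-a) ^ α + b ^ α :=
      add_nonneg (Real.rpow_nonneg (by linarith) α) (Real.rpow_nonneg hb α)
    have : |-((-a) ^ α) - b ^ α| = (-a) ^ α + b ^ α := by
      rw [abs_of_nonpos (by linarith)]; ring
    rw [hab, this]
    linarith
  · rw [fval_nonpos h0 ha, fval_nonpos h0 hb]
    have := abs_rpow_sub_abs_rpow h0 h1 (neg_nonneg.2 hb) (neg_nonneg.2 ha)
    have heq : |(-b) - (-a)| = |a - b| := by congr 1; ring
    rw [heq] at this
    have heq2 : |-((-a) ^ α) - -((-b) ^ α)| = |(-b) ^ α - (-a) ^ α| := by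
      congr 1; ring
    rw [heq2]
    nlinarith [Real.rpow_nonneg (abs_nonneg (a - b)) α]

lemma abs_fval {α : ℝ} (h0 : 0 < α) (t : ℝ) : abs (|t| ^ (α - 1) * t) = |t| ^ α := by
  rcases le_total 0 t with ht | ht
  · rw [fval_nonneg h0 ht, abs_of_nonneg (Real.rpow_nonneg ht α), abs_of_nonneg ht]
  · rw [fval_nonpos h0 ht, abs_neg, abs_of_nonneg (Real.rpow_nonneg (by linarith) α),
      abs_of_nonpos ht]

lemma tail_small {N : ℕ} {q : ℝ} (hq : 0 < q) {w : EuclideanSpace ℝ (Fin N) → ℝ}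
    (hw : MemLp w (ENNReal.ofReal q) volume) :
    Tendsto (fun m : ℕ => eLpNorm
      (((Metric.ball (0 : EuclideanSpace ℝ (Fin N)) (m : ℝ))ᶜ).indicator w)
      (ENNReal.ofReal q) volume) atTop (nhds 0) := by
  have hq0 : ENNReal.ofReal q ≠ 0 := by simp [ENNReal.ofReal_eq_zero, not_le, hq]
  have hqt : ENNReal.ofReal q ≠ ⊤ := ENNReal.ofReal_ne_top
  have htr : (ENNReal.ofReal q).toReal = q := ENNReal.toReal_ofReal hq.le
  have hwm : AEMeasurable w volume := hw.aestronglyMeasurable.aemeasurable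
  have hmeasball : ∀ m : ℕ,
      MeasurableSet ((Metric.ball (0 : EuclideanSpace ℝ (Fin N)) (m : ℝ))ᶜ) :=
    fun m => Metric.isOpen_ball.measurableSet.compl
  set G : ℕ → EuclideanSpace ℝ (Fin N) → ℝ≥0∞ := fun m x =>
    (‖((Metric.ball (0 : EuclideanSpace ℝ (Fin N)) (m : ℝ))ᶜ).indicator w x‖₊ : ℝ≥0∞) ^ q
    with hG
  have hGmeas : ∀ m, AEMeasurable (G m) volume := fun m =>
    (AEMeasurable.enorm (hwm.indicator (hmeasball m))).pow_const q
  have hlim : Tendsto (fun m : ℕ => ∫⁻ x, G m x) atTop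
      (nhds (∫⁻ _x : EuclideanSpace ℝ (Fin N), (0 : ℝ≥0∞))) := by
    apply tendsto_lintegral_of_dominated_convergence' (fun x => (‖w x‖₊ : ℝ≥0∞) ^ q) hGmeas
    · intro m
      refine Filter.Eventually.of_forall fun x => ?_
      rw [hG]
      refine ENNReal.rpow_le_rpow ?_ hq.le
      by_cases hx : x ∈ (Metric.ball (0 : EuclideanSpace ℝ (Fin N)) (m : ℝ))ᶜ
      · rw [Set.indicator_of_mem hx]
      · simp [Set.indicator_of_notMem hx]
    · have := lintegral_rpow_enorm_lt_top_of_eLpNorm_lt_top hq0 hqt hw.2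
      rw [htr] at this
      exact this.ne
    · refine Filter.Eventually.of_forall fun x => ?_
      have hev : ∀ᶠ m : ℕ in atTop, G m x = 0 := by
        filter_upwards [eventually_gt_atTop ⌈‖x‖⌉₊] with m hm
        have hxm : ‖x‖ < (m : ℝ) := lt_of_le_of_lt (Nat.le_ceil _) (by exact_mod_cast hm)
        have hxball : x ∈ Metric.ball (0 : EuclideanSpace ℝ (Fin N)) (m : ℝ) := by
          simpa [Metric.mem_ball, dist_zero_right] using hxm
        rw [hG]
        simp [Set.indicator_of_notMem (Set.notMem_compl_iff.2 hxball),
          ENNReal.zero_rpow_of_pos hq]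
      exact Tendsto.congr' (by filter_upwards [hev] with m hm using hm.symm) tendsto_const_nhds
  rw [lintegral_zero] at hlim
  have hcont := (ENNReal.continuous_rpow_const (y := 1 / q)).tendsto 0
  have := hcont.comp hlim
  rw [ENNReal.zero_rpow_of_pos (by positivity)] at this
  refine Tendsto.congr (fun m => ?_) this
  rw [Function.comp_apply, eLpNorm_eq_lintegral_rpow_enorm_toReal hq0 hqt, htr]; rfl

theorem stmt15 (N : ℕ) (p p' : ℝ) (h1 : 1 < p') (h2 : p' < 2)
    (hconj : 1 / p + 1 / p' = 1)
    (v : ℕ → EuclideanSpace ℝ (Fin N) → ℝ) (w : EuclideanSpace ℝ (Fin N) → ℝ)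
    (hv : ∀ n, MemLp (v n) (ENNReal.ofReal p') volume)
    (hw : MemLp w (ENNReal.ofReal p') volume)
    (hweak : ∀ g : EuclideanSpace ℝ (Fin N) → ℝ, MemLp g (ENNReal.ofReal p) volume →
      Tendsto (fun n => ∫ x, (v n x - w x) * g x) atTop (nhds 0))
    (hloc : ∀ r > (0 : ℝ), Tendsto (fun n =>
        eLpNorm ((Metric.ball (0 : EuclideanSpace ℝ (Fin N)) r).indicator
          (fun x => v n x - w x)) (ENNReal.ofReal p') volume) atTop (nhds 0)) :
    Tendsto (fun n => eLpNorm (fun x =>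
        |v n x - w x| ^ (p' - 2) * (v n x - w x) - |v n x| ^ (p' - 2) * v n x +
          |w x| ^ (p' - 2) * w x) (ENNReal.ofReal p) volume) atTop (nhds 0) := by
  have hp'0 : (0:ℝ) < p' := by linarith
  have hpinv : 1 / p = 1 - 1 / p' := by linarith
  have hpinvpos : 0 < 1 / p := by
    rw [hpinv]
    have : 1 / p' < 1 := by rw [div_lt_one hp'0]; linarith
    linarith
  have hp0 : (0:ℝ) < p := one_div_pos.mp hpinvpos
  have hid : p' + p = p * p' := by
    field_simp at hconj
    linarith
  set α := p' - 1 with hαdef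
  have hα0 : 0 < α := by rw [hαdef]; linarith
  have hα1 : α ≤ 1 := by rw [hαdef]; linarith
  have hpα : p * α = p' := by rw [hαdef]; nlinarith
  have hp1 : (1:ℝ) ≤ p := by nlinarith
  have hexp : p' - 2 = α - 1 := by rw [hαdef]; ring
  set q := ENNReal.ofReal p with hqdef
  set q' := ENNReal.ofReal p' with hq'def
  have hq1 : 1 ≤ q := by rw [hqdef]; exact ENNReal.one_le_ofReal.mpr hp1
  have hqmul : q * ENNReal.ofReal α = q' := by
    rw [hqdef, hq'def, ← ENNReal.ofReal_mul hp0.le, hpα]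
  set F : ℝ → ℝ := fun t => |t| ^ (α - 1) * t with hF
  have hFmeas : Measurable F := (measurable_id.abs.pow_const (α - 1)).mul measurable_id
  rw [ENNReal.tendsto_nhds_zero]
  intro ε hε
  rcases eq_or_ne ε ⊤ with rfl | hεtop
  · exact Filter.Eventually.of_forall fun n => le_top
  set κ := ε / 6 with hκdef
  have hκ0 : 0 < κ := ENNReal.div_pos hε.ne' (by norm_num)
  have hκtop : κ ≠ ⊤ := (ENNReal.div_lt_top hεtop (by norm_num)).ne
  set δ := κ ^ (1 / α) with hδdef
  have hδ0 : 0 < δ := ENNReal.rpow_pos hκ0 hκtop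
  have hδα : δ ^ α = κ := by
    rw [hδdef, ← ENNReal.rpow_mul, one_div, inv_mul_cancel₀ hα0.ne', ENNReal.rpow_one]
  obtain ⟨m, hmtail, hm1⟩ := ((ENNReal.tendsto_nhds_zero.mp (tail_small hp'0 hw) δ hδ0).and
    (eventually_ge_atTop 1)).exists
  have hr0 : (0:ℝ) < (m : ℝ) := by exact_mod_cast hm1
  set B := Metric.ball (0 : EuclideanSpace ℝ (Fin N)) (m : ℝ) with hB
  have hBmeas : MeasurableSet B := Metric.isOpen_ball.measurableSet
  filter_upwards [ENNReal.tendsto_nhds_zero.mp (hloc (m : ℝ) hr0) δ hδ0] with n hn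
  set g : EuclideanSpace ℝ (Fin N) → ℝ := fun x => v n x - w x with hg
  have hgm : AEStronglyMeasurable g volume :=
    (hv n).aestronglyMeasurable.sub hw.aestronglyMeasurable
  have hFg : AEStronglyMeasurable (fun x => F (g x)) volume :=
    (hFmeas.comp_aemeasurable hgm.aemeasurable).aestronglyMeasurable
  have hFv : AEStronglyMeasurable (fun x => F (v n x)) volume :=
    (hFmeas.comp_aemeasurable (hv n).aestronglyMeasurable.aemeasurable).aestronglyMeasurable
  have hFw : AEStronglyMeasurable (fun x => F (w x)) volume :=
    (hFmeas.comp_aemeasurable hw.aestronglyMeasurable.aemeasurable).aestronglyMeasurable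
  set E : EuclideanSpace ℝ (Fin N) → ℝ := fun x => F (g x) - F (v n x) + F (w x) with hE
  have hEm : AEStronglyMeasurable E volume := (hFg.sub hFv).add hFw
  have hgoal : (fun x => |v n x - w x| ^ (p' - 2) * (v n x - w x) - |v n x| ^ (p' - 2) * v n x +
      |w x| ^ (p' - 2) * w x) = E := by
    funext x
    rw [hE, hF, hg, hexp]
  rw [hgoal]
  -- splitting
  have step1 : eLpNorm E q volume ≤
      eLpNorm (B.indicator E) q volume + eLpNorm (Bᶜ.indicator E) q volume := by
    nth_rewrite 1 [← Set.indicator_self_add_compl B E]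
    exact eLpNorm_add_le (hEm.indicator hBmeas) (hEm.indicator hBmeas.compl) hq1
  -- generic estimate: from pointwise bound to eLpNorm bound
  have generic : ∀ (u₁ u₂ : EuclideanSpace ℝ (Fin N) → ℝ),
      (∀ x, ‖u₁ x‖ ≤ 3 * ‖u₂ x‖ ^ α) →
      eLpNorm u₁ q volume ≤ 3 * (eLpNorm u₂ q' volume) ^ α := by
    intro u₁ u₂ hu
    calc eLpNorm u₁ q volume ≤ eLpNorm (fun x => 3 * ‖u₂ x‖ ^ α) q volume :=
          eLpNorm_mono_real hu
      _ = (‖(3:ℝ)‖₊ : ℝ≥0∞) * eLpNorm (fun x => ‖u₂ x‖ ^ α) q volume := by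
          rw [← enorm_eq_nnnorm, ← eLpNorm_const_smul (3:ℝ) (fun x => ‖u₂ x‖ ^ α) q volume]
          rfl
      _ = 3 * (eLpNorm u₂ (q * ENNReal.ofReal α) volume) ^ α := by
          rw [eLpNorm_norm_rpow _ hα0]
          congr 1
          simp
      _ = 3 * (eLpNorm u₂ q' volume) ^ α := by rw [hqmul]
  -- ball piece pointwise
  have hball_pt : ∀ x, ‖B.indicator E x‖ ≤ 3 * ‖B.indicator g x‖ ^ α := by
    intro x
    by_cases hx : x ∈ B
    · rw [Set.indicator_of_mem hx, Set.indicator_of_mem hx, Real.norm_eq_abs, Real.norm_eq_abs]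
      have h1 : |F (g x)| = |g x| ^ α := abs_fval hα0 (g x)
      have h2 : |F (v n x) - F (w x)| ≤ 2 * |v n x - w x| ^ α := key_ptwise hα0 hα1 _ _
      have h3 : |E x| ≤ |F (g x)| + |F (v n x) - F (w x)| := by
        have heq : E x = F (g x) + -(F (v n x) - F (w x)) := by rw [hE]; ring
        rw [heq]
        exact (abs_add_le _ _).trans (by rw [abs_neg])
      have hgx : g x = v n x - w x := rfl
      rw [hgx] at h1
      calc |E x| ≤ |F (g x)| + |F (v n x) - F (w x)| := h3
        _ ≤ |v n x - w x| ^ α + 2 * |v n x - w x| ^ α := by rw [← h1]; linarith [h2, h1]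
        _ = 3 * |v n x - w x| ^ α := by ring
    · rw [Set.indicator_of_notMem hx, Set.indicator_of_notMem hx]
      simp [Real.zero_rpow hα0.ne']
  -- tail piece pointwise
  have htail_pt : ∀ x, ‖Bᶜ.indicator E x‖ ≤ 3 * ‖Bᶜ.indicator w x‖ ^ α := by
    intro x
    by_cases hx : x ∈ Bᶜ
    · rw [Set.indicator_of_mem hx, Set.indicator_of_mem hx, Real.norm_eq_abs, Real.norm_eq_abs]
      have h1 : |F (w x)| = |w x| ^ α := abs_fval hα0 (w x)
      have h2 : |F (g x) - F (v n x)| ≤ 2 * |g x - v n x| ^ α := key_ptwise hα0 hα1 _ _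
      have hgv : |g x - v n x| = |w x| := by
        rw [hg]
        simp only
        rw [show v n x - w x - v n x = -(w x) by ring, abs_neg]
      rw [hgv] at h2
      have h3 : |E x| ≤ |F (g x) - F (v n x)| + |F (w x)| := by
        have heq : E x = (F (g x) - F (v n x)) + F (w x) := by rw [hE]
        rw [heq]
        exact abs_add_le _ _
      calc |E x| ≤ |F (g x) - F (v n x)| + |F (w x)| := h3
        _ ≤ 2 * |w x| ^ α + |w x| ^ α := by rw [← h1]; linarith [h2, h1]
        _ = 3 * |w x| ^ α := by ring
    · rw [Set.indicator_of_notMem hx, Set.indicator_of_notMem hx]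
      simp [Real.zero_rpow hα0.ne']
  -- combine
  have hball : eLpNorm (B.indicator E) q volume ≤ 3 * κ := by
    refine le_trans (generic _ _ hball_pt) ?_
    have : eLpNorm (B.indicator g) q' volume ≤ δ := hn
    calc (3:ℝ≥0∞) * (eLpNorm (B.indicator g) q' volume) ^ α ≤ 3 * δ ^ α :=
          mul_le_mul_right (ENNReal.rpow_le_rpow this hα0.le) 3
      _ = 3 * κ := by rw [hδα]
  have htail : eLpNorm (Bᶜ.indicator E) q volume ≤ 3 * κ := by
    refine le_trans (generic _ _ htail_pt) ?_
    calc (3:ℝ≥0∞) * (eLpNorm (Bᶜ.indicator w) q' volume) ^ α ≤ 3 * δ ^ α :=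
          mul_le_mul_right (ENNReal.rpow_le_rpow hmtail hα0.le) 3
      _ = 3 * κ := by rw [hδα]
  calc eLpNorm E q volume ≤ eLpNorm (B.indicator E) q volume + eLpNorm (Bᶜ.indicator E) q volume :=
        step1
    _ ≤ 3 * κ + 3 * κ := add_le_add hball htail
    _ = 6 * κ := by ring
    _ = 6 * (ε / 6) := by rw [hκdef]
    _ ≤ ε := ENNReal.mul_div_le
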